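/- Let (V, d_Ch) be a connected graph with its path metric, let x ∈ V, and let Γ = (x_n)_{n∈ℕ} be a geodesic ray in the graph (i.e. d_Ch(x_m, x_n) = |n - m| for all m, n). Then there exists k ∈ ℕ such that for every geodesic path from x to x_k, the concatenation of that path with (x_n)_{n ≥ k} is again a geodesic ray, i.e. d_Ch(x, x_n) = d_Ch(x, x_k) + (n - k) for all n ≥ k. -/
import Mathlib


/-- Preparation lemma (Lemma 2.3): if `Γ` is a geodesic ray in a connected
graph and `x` is any vertex, then there is `k` such that the concatenation of
any geodesic from `x` to `Γ k` with the tail `(Γ n)_{n ≥ k}` is again a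
geodesic ray, i.e. `dist x (Γ n) = dist x (Γ k) + (n - k)` for `n ≥ k`. -/
theorem stmt1 {V : Type*} (G : SimpleGraph V) (hconn : G.Connected)
    (x : V) (Γ : ℕ → V)
    (hadj : ∀ n : ℕ, G.Adj (Γ n) (Γ (n + 1)))
    (hgeo : ∀ m n : ℕ, m ≤ n → G.dist (Γ m) (Γ n) = n - m) :
    ∃ k : ℕ, ∀ n : ℕ, k ≤ n →
      G.dist x (Γ n) = G.dist x (Γ k) + (n - k) := by
  set C := G.dist x (Γ 0) with hC
  -- lower bound: n ≤ dist x (Γ n) + C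
  have hlb : ∀ n : ℕ, n ≤ G.dist x (Γ n) + C := by
    intro n
    have h0 : G.dist (Γ 0) (Γ n) = n := by simpa using hgeo 0 n (Nat.zero_le n)
    have h2 := hconn.dist_triangle (u := Γ 0) (v := x) (w := Γ n)
    have hc : G.dist (Γ 0) x = G.dist x (Γ 0) := SimpleGraph.dist_comm
    omega
  set g : ℕ → ℕ := fun n => G.dist x (Γ n) + C - n with hg
  have hstep : ∀ n : ℕ, g (n + 1) ≤ g n := by
    intro n
    have h1 : G.dist (Γ n) (Γ (n + 1)) = 1 :=
      (SimpleGraph.dist_eq_one_iff_adj).mpr (hadj n)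
    have := hconn.dist_triangle (u := x) (v := Γ n) (w := Γ (n + 1))
    rw [h1] at this
    have := hlb n
    simp only [hg]
    omega
  have hanti : ∀ m n : ℕ, m ≤ n → g n ≤ g m := by
    intro m n hmn
    induction n with
    | zero => interval_cases m; exact le_rfl
    | succ n ih =>
      rcases Nat.lt_or_ge m (n + 1) with h | h
      · exact le_trans (hstep n) (ih (Nat.lt_succ_iff.mp h))
      · have : m = n + 1 := le_antisymm hmn h
        subst this; exact le_rfl
  -- take k attaining the infimum of g
  have hne : (Set.range g).Nonempty := ⟨g 0, ⟨0, rfl⟩⟩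
  obtain ⟨k, hk⟩ := Nat.sInf_mem hne
  refine ⟨k, fun n hn => ?_⟩
  have h1 : g n ≤ g k := hanti k n hn
  have h2 : g k ≤ g n := hk ▸ Nat.sInf_le ⟨n, rfl⟩
  have h3 : g n = g k := le_antisymm h1 h2
  have := hlb n
  have := hlb k
  simp only [hg] at h3
  omega
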